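/- Let Γ be a k-regular graph of girth g = 2s+1 and let β = M(k,g-2)/|V(Γ)|. Then for every nonempty subset S ⊆ V(Γ) there exists a vertex u such that the ball of radius s-1 around u contains at least β·|S| vertices of S. -/

import Mathlib

open SimpleGraph Walk

/-- The Moore bound for odd girth `2s+1`. -/
def mooreOdd (k s : ℕ) : ℕ := 1 + ∑ i ∈ Finset.range s, k * (k - 1) ^ i

section helpers
variable {V : Type*} [DecidableEq V] {G : SimpleGraph V}

lemma notMem_support_of_length_lt_dist {v x w : V} (p : G.Walk v x)
    (hlt : p.length < G.dist v w) : w ∉ p.support := fun hw => by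
  have h1 := G.dist_le (p.takeUntil w hw)
  have h2 := p.length_takeUntil_le hw
  omega

lemma notMem_support_of_length_le_dist {v x w : V} (p : G.Walk v x)
    (hle : p.length ≤ G.dist v w) (hne : w ≠ x) : w ∉ p.support := fun hw => by
  have h1 := G.dist_le (p.takeUntil w hw)
  have h3 := congrArg Walk.length (p.take_spec hw)
  rw [Walk.length_append] at h3
  have h4 : (p.dropUntil w hw).length = 0 := by omega
  exact hne (Walk.eq_of_length_eq_zero h4)

lemma IsPath.concat'' {v x w : V} {p : G.Walk v x} (hp : p.IsPath) (h : G.Adj x w)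
    (hw : w ∉ p.support) : (p.concat h).IsPath := by
  rw [← Walk.isPath_reverse_iff, Walk.reverse_concat, Walk.cons_isPath_iff]
  refine ⟨hp.reverse, ?_⟩
  rw [Walk.support_reverse, List.mem_reverse]
  exact hw

/-- Two distinct paths between the same endpoints yield a cycle whose length is at most
the sum of their lengths. -/
lemma exists_cycle_of_two_paths : ∀ (n : ℕ) {v w : V} (p q : G.Walk v w),
    p.IsPath → q.IsPath → p ≠ q → p.length + q.length ≤ n →
    ∃ (u : V) (c : G.Walk u u), c.IsCycle ∧ c.length ≤ p.length + q.length := by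
  intro n
  induction n with
  | zero =>
    intro v w p q hp hq hne hlen
    have hp0 : p.length = 0 := by omega
    have hq0 : q.length = 0 := by omega
    cases p with
    | nil =>
      exact absurd (Walk.isPath_iff_eq_nil.mp hq) hne.symm
    | cons h p' => simp at hp0
  | succ n ih =>
    intro v w p q hp hq hne hlen
    cases p with
    | nil =>
      exact absurd (Walk.isPath_iff_eq_nil.mp hq) hne.symm
    | cons h p' =>
      cases q with
      | nil =>
        exact absurd (Walk.isPath_iff_eq_nil.mp hp) hne
      | cons h' q' =>
        rename_i a b
        by_cases hab : a = b
        · subst hab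
          have hne' : p' ≠ q' := by rintro rfl; exact hne rfl
          obtain ⟨u, c, hc, hcl⟩ := ih p' q' ((Walk.cons_isPath_iff h p').mp hp).1
            ((Walk.cons_isPath_iff h' q').mp hq).1 hne' (by simp at hlen; omega)
          exact ⟨u, c, hc, by simp; omega⟩
        · -- first steps diverge: build a cycle through v
          have hvp' : v ∉ p'.support := ((Walk.cons_isPath_iff h p').mp hp).2
          have hvq' : v ∉ q'.support := ((Walk.cons_isPath_iff h' q').mp hq).2
          set m := (p'.append q'.reverse).bypass with hm
          have hmpath : m.IsPath := Walk.bypass_isPath _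
          have hvm : v ∉ m.support := by
            intro hv
            have := Walk.support_bypass_subset _ hv
            rw [Walk.mem_support_append_iff, Walk.support_reverse, List.mem_reverse] at this
            exact this.elim hvp' hvq'
          have hml : m.length ≤ p'.length + q'.length := by
            have := Walk.length_bypass_le (p'.append q'.reverse)
            rw [Walk.length_append, Walk.length_reverse] at this
            exact this
          -- cycle : v → a → ... → b → v
          refine ⟨v, Walk.cons h (m.concat h'.symm), ?_, ?_⟩
          · rw [Walk.cons_isCycle_iff]
            constructor
            · exact IsPath.concat'' hmpath h'.symm hvm
            · rw [Walk.edges_concat]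
              simp only [List.concat_eq_append, List.mem_append, List.mem_singleton, not_or]
              constructor
              · intro hmem
                exact hvm (Walk.fst_mem_support_of_mem_edges m hmem)
              · intro hEq
                rw [Sym2.eq_iff] at hEq
                rcases hEq with ⟨h1, h2⟩ | ⟨h1, h2⟩
                · exact G.ne_of_adj h' h1
                · exact hab h2
          · simp only [Walk.length_cons, Walk.length_concat]
            omega
end helpers

section girthlem
variable {V : Type*} [DecidableEq V] {G : SimpleGraph V} {s : ℕ}

lemma girth_paths_eq (hg : G.egirth = ((2 * s + 1 : ℕ) : ℕ∞)) {v w : V} (p q : G.Walk v w)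
    (hp : p.IsPath) (hq : q.IsPath) (hlen : p.length + q.length < 2 * s + 1) : p = q := by
  by_contra hne
  obtain ⟨u, c, hc, hcl⟩ := exists_cycle_of_two_paths (p.length + q.length) p q hp hq hne le_rfl
  have h2 : ((2 * s + 1 : ℕ) : ℕ∞) ≤ (c.length : ℕ∞) := by
    rw [← hg]
    exact SimpleGraph.le_egirth.mp le_rfl u c hc
  have h3 : 2 * s + 1 ≤ c.length := Nat.cast_le.mp h2
  omega

/-- In a graph of odd girth `2s+1`, a vertex at distance `i+1` from `v` (with `2(i+1) < 2s+1`)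
has a unique neighbour at distance `i`. -/
lemma unique_below (hg : G.egirth = ((2 * s + 1 : ℕ) : ℕ∞)) {v w x y : V} {i : ℕ}
    (hdw : G.dist v w = i + 1) (hle : 2 * (i + 1) < 2 * s + 1)
    (hx : G.Adj x w) (hy : G.Adj y w) (hrx : G.Reachable v x) (hry : G.Reachable v y)
    (hdx : G.dist v x = i) (hdy : G.dist v y = i) : x = y := by
  obtain ⟨p, hp, hpl⟩ := hrx.exists_path_of_dist
  obtain ⟨q, hq, hql⟩ := hry.exists_path_of_dist
  have hwp : w ∉ p.support := notMem_support_of_length_lt_dist p (by omega)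
  have hwq : w ∉ q.support := notMem_support_of_length_lt_dist q (by omega)
  have hpx : (p.concat hx).IsPath := IsPath.concat'' hp hx hwp
  have hqy : (q.concat hy).IsPath := IsPath.concat'' hq hy hwq
  have heq : p.concat hx = q.concat hy := by
    apply girth_paths_eq hg _ _ hpx hqy
    rw [Walk.length_concat, Walk.length_concat]
    omega
  have h2 := congrArg (fun r => r.reverse.support) heq
  simp only [Walk.reverse_concat, Walk.support_cons] at h2
  have h3 : p.reverse.support = q.reverse.support := by
    injection h2
  rw [p.reverse.support_eq_cons, q.reverse.support_eq_cons] at h3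
  injection h3

/-- No edges within a distance level `i` when `2i+1 < 2s+1`. -/
lemma no_level_edge (hg : G.egirth = ((2 * s + 1 : ℕ) : ℕ∞)) {v w w' : V} {i : ℕ}
    (hle : 2 * i + 1 < 2 * s + 1) (h : G.Adj w w')
    (hrw : G.Reachable v w) (hrw' : G.Reachable v w')
    (hdw : G.dist v w = i) (hdw' : G.dist v w' = i) : False := by
  obtain ⟨p, hp, hpl⟩ := hrw.exists_path_of_dist
  obtain ⟨q, hq, hql⟩ := hrw'.exists_path_of_dist
  have hwq : w ∉ q.support :=
    notMem_support_of_length_le_dist q (by omega) (G.ne_of_adj h)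
  have hq2 : (q.concat h.symm).IsPath := IsPath.concat'' hq h.symm hwq
  have heq : p = q.concat h.symm := by
    apply girth_paths_eq hg _ _ hp hq2
    rw [Walk.length_concat]
    omega
  have := congrArg Walk.length heq
  rw [Walk.length_concat, hpl, hql] at this
  omega

lemma dist_adj_le {v w z : V} (hr : G.Reachable v w) (h : G.Adj w z) :
    G.dist v z ≤ G.dist v w + 1 := by
  obtain ⟨p, -, hpl⟩ := hr.exists_path_of_dist
  have := G.dist_le (p.concat h)
  rwa [Walk.length_concat, hpl] at this

lemma exists_below {v z : V} (hr : G.Reachable v z) (hd : 0 < G.dist v z) :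
    ∃ x, G.Adj x z ∧ G.Reachable v x ∧ G.dist v x = G.dist v z - 1 := by
  obtain ⟨p, hp, hpl⟩ := hr.exists_path_of_dist
  cases hrev : p.reverse with
  | nil =>
    exfalso
    have h0 := congrArg Walk.length hrev
    rw [Walk.length_reverse] at h0
    simp only [Walk.length_nil] at h0
    omega
  | cons hadj r =>
    rename_i x
    have hlen : r.length = G.dist v z - 1 := by
      have := congrArg Walk.length hrev
      rw [Walk.length_reverse] at this
      simp only [Walk.length_cons] at this
      omega
    refine ⟨x, hadj.symm, r.reverse.reachable, ?_⟩
    have h1 : G.dist v x ≤ G.dist v z - 1 := by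
      have := G.dist_le r.reverse
      rwa [Walk.length_reverse, hlen] at this
    have h2 : G.dist v z ≤ G.dist v x + 1 := dist_adj_le r.reverse.reachable hadj.symm
    omega
end girthlem

section ball
open Finset
variable {V : Type*} [Fintype V] [DecidableEq V] {G : SimpleGraph V} [DecidableRel G.Adj]

lemma ball_card_lower {k s : ℕ} (hk : 3 ≤ k) (hs : 1 ≤ s)
    (hreg : G.IsRegularOfDegree k) (hg : G.egirth = ((2 * s + 1 : ℕ) : ℕ∞)) (v : V) :
    mooreOdd k (s - 1) ≤ ({w : V | G.Reachable v w ∧ G.dist v w ≤ s - 1} : Set V).ncard := by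
  classical
  set L : ℕ → Finset V := fun i => univ.filter (fun w => G.Reachable v w ∧ G.dist v w = i) with hL
  have hmemL : ∀ i w, w ∈ L i ↔ G.Reachable v w ∧ G.dist v w = i := by
    intro i w; simp [hL]
  have hstep : ∀ i : ℕ, 1 ≤ i → i + 1 ≤ s - 1 → (k - 1) * (L i).card ≤ (L (i+1)).card := by
    intro i hi1 his
    have hexists : ∀ z ∈ L (i+1), ∃ x, G.Adj x z ∧ G.Reachable v x ∧ G.dist v x = i := by
      intro z hz
      rw [hmemL] at hz
      obtain ⟨x, h1, h2, h3⟩ := exists_below hz.1 (by omega)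
      exact ⟨x, h1, h2, by omega⟩
    set f : V → V := fun z => if h : z ∈ L (i+1) then (hexists z h).choose else v with hf
    have hfspec : ∀ z (hz : z ∈ L (i+1)),
        G.Adj (f z) z ∧ G.Reachable v (f z) ∧ G.dist v (f z) = i := by
      intro z hz; rw [hf]; simp only [dif_pos hz]; exact (hexists z hz).choose_spec
    have hmaps : ∀ z ∈ L (i+1), f z ∈ L i := by
      intro z hz
      rw [hmemL]
      exact ⟨(hfspec z hz).2.1, (hfspec z hz).2.2⟩
    rw [Finset.card_eq_sum_card_fiberwise hmaps]
    have hfiber : ∀ w ∈ L i, (k-1) ≤ ((L (i+1)).filter (fun z => f z = w)).card := by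
      intro w hw
      rw [hmemL] at hw
      have hsub : (G.neighborFinset w).filter (fun z => G.dist v z = i + 1) ⊆
          (L (i+1)).filter (fun z => f z = w) := by
        intro z hz
        simp only [mem_filter, SimpleGraph.mem_neighborFinset] at hz
        obtain ⟨hadj, hdz⟩ := hz
        have hrz : G.Reachable v z := hw.1.trans hadj.reachable
        have hzL : z ∈ L (i+1) := by rw [hmemL]; exact ⟨hrz, hdz⟩
        rw [mem_filter]
        refine ⟨hzL, ?_⟩
        have hsp := hfspec z hzL
        exact unique_below hg hdz (by omega) hsp.1 hadj hsp.2.1 hw.1 hsp.2.2 hw.2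
      refine le_trans ?_ (Finset.card_le_card hsub)
      have hdownle : ((G.neighborFinset w).filter
          (fun z => G.Reachable v z ∧ G.dist v z = i - 1)).card ≤ 1 := by
        apply Finset.card_le_one.mpr
        intro a ha b hb
        simp only [mem_filter, SimpleGraph.mem_neighborFinset] at ha hb
        have hii : i - 1 + 1 = i := by omega
        exact unique_below hg (hii ▸ hw.2) (by omega) ha.1.symm hb.1.symm ha.2.1 hb.2.1
          ha.2.2 hb.2.2
      have hcover : G.neighborFinset w ⊆
          ((G.neighborFinset w).filter (fun z => G.Reachable v z ∧ G.dist v z = i - 1)) ∪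
          ((G.neighborFinset w).filter (fun z => G.dist v z = i + 1)) := by
        intro z hz
        have hadj : G.Adj w z := (SimpleGraph.mem_neighborFinset ..).mp hz
        have hrz : G.Reachable v z := hw.1.trans hadj.reachable
        have h1 : G.dist v z ≤ i + 1 := hw.2 ▸ dist_adj_le hw.1 hadj
        have h2 : G.dist v w ≤ G.dist v z + 1 := dist_adj_le hrz hadj.symm
        have h3 : G.dist v z ≠ i := by
          intro hdz
          exact no_level_edge hg (by omega) hadj hw.1 hrz hw.2 hdz
        rw [Finset.mem_union, mem_filter, mem_filter]
        rcases Nat.lt_or_ge (G.dist v z) i with hlt | hge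
        · left; exact ⟨hz, hrz, by omega⟩
        · right; exact ⟨hz, by omega⟩
      have hcard := Finset.card_le_card hcover
      have hdeg : (G.neighborFinset w).card = k := hreg w
      have hun := Finset.card_union_le
        ((G.neighborFinset w).filter (fun z => G.Reachable v z ∧ G.dist v z = i - 1))
        ((G.neighborFinset w).filter (fun z => G.dist v z = i + 1))
      omega
    calc (k - 1) * (L i).card = ∑ _w ∈ L i, (k-1) := by
          rw [Finset.sum_const, smul_eq_mul, mul_comm]
    _ ≤ ∑ w ∈ L i, ((L (i+1)).filter (fun z => f z = w)).card := Finset.sum_le_sum hfiber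
  have hL0 : (L 0).card = 1 := by
    have : L 0 = {v} := by
      ext w
      rw [hmemL, Finset.mem_singleton]
      constructor
      · rintro ⟨hr, hd⟩
        exact (hr.dist_eq_zero_iff.mp hd).symm
      · intro h
        subst h
        exact ⟨SimpleGraph.Reachable.refl _, SimpleGraph.dist_self⟩
    rw [this, Finset.card_singleton]
  have hL1 : (L 1).card = k := by
    have : L 1 = G.neighborFinset v := by
      ext w
      rw [hmemL, SimpleGraph.mem_neighborFinset]
      constructor
      · rintro ⟨hr, hd⟩
        exact SimpleGraph.dist_eq_one_iff_adj.mp hd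
      · intro h
        exact ⟨h.reachable, SimpleGraph.dist_eq_one_iff_adj.mpr h⟩
    rw [this]
    exact hreg v
  have hlower : ∀ i, 1 ≤ i → i ≤ s - 1 → k * (k-1)^(i-1) ≤ (L i).card := by
    intro i hi1
    induction i, hi1 using Nat.le_induction with
    | base => intro h1; simpa using hL1.ge
    | succ i hi ih =>
      intro hii
      have h1 : k * (k-1)^(i+1-1) = (k-1) * (k * (k-1)^(i-1)) := by
        rw [Nat.add_sub_cancel]
        conv_lhs => rw [show i = (i-1)+1 by omega, pow_succ]
        ring
      rw [h1]
      calc (k-1) * (k * (k-1)^(i-1)) ≤ (k-1) * (L i).card :=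
            Nat.mul_le_mul_left _ (ih (by omega))
      _ ≤ (L (i+1)).card := hstep i hi hii
  -- assemble the ball
  obtain ⟨n, rfl⟩ : ∃ n, s = n + 1 := ⟨s - 1, by omega⟩
  have hdisj : ((Finset.range (n+1) : Finset ℕ) : Set ℕ).PairwiseDisjoint L := by
    intro i _ j _ hij
    simp only [Finset.disjoint_left]
    intro w hwi hwj
    rw [hmemL] at hwi hwj
    exact hij (hwi.2.symm.trans hwj.2)
  have hBcard : ((Finset.range (n+1)).biUnion L).card = ∑ i ∈ Finset.range (n+1), (L i).card :=
    Finset.card_biUnion (fun i hi j hj hij => hdisj (by simpa using hi) (by simpa using hj) hij)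
  have hBset : ({w : V | G.Reachable v w ∧ G.dist v w ≤ n + 1 - 1} : Set V).ncard =
      ((Finset.range (n+1)).biUnion L).card := by
    rw [Set.ncard_eq_toFinset_card', Set.toFinset_setOf]
    congr 1
    ext w
    simp only [Finset.mem_filter, Finset.mem_univ, true_and, Finset.mem_biUnion,
      Finset.mem_range]
    constructor
    · rintro ⟨hr, hd⟩
      exact ⟨G.dist v w, by omega, (hmemL _ w).mpr ⟨hr, rfl⟩⟩
    · rintro ⟨i, hi, hw⟩
      rw [hmemL] at hw
      exact ⟨hw.1, by omega⟩
  rw [hBset, hBcard]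
  rw [Finset.sum_range_succ']
  have hsum : ∑ i ∈ Finset.range n, k * (k-1)^i ≤ ∑ i ∈ Finset.range n, (L (i+1)).card := by
    apply Finset.sum_le_sum
    intro j hj
    rw [Finset.mem_range] at hj
    have := hlower (j+1) (by omega) (by omega)
    simpa using this
  have : mooreOdd k (n + 1 - 1) = 1 + ∑ i ∈ Finset.range n, k * (k-1)^i := by
    simp [mooreOdd]
  omega

end ball

/-- Let `Γ` be a `k`-regular graph of girth `g = 2s+1` and `β = M(k,g-2)/|V(Γ)|`.
For every nonempty `S ⊆ V(Γ)` there is a vertex `u` whose ball of radius `s-1`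
contains at least `β·|S|` vertices of `S`. -/
theorem exists_ball_capturing_fraction {V : Type*} [Fintype V] (G : SimpleGraph V)
    [DecidableRel G.Adj] (k s : ℕ) (hk : 3 ≤ k) (hs : 1 ≤ s)
    (hreg : G.IsRegularOfDegree k) (hgirth : G.girth = (2 * s + 1 : ℕ))
    (S : Set V) (hS : S.Nonempty) :
    ∃ u : V,
      ((mooreOdd k (s - 1) : ℝ) / (Nat.card V : ℝ)) * S.ncard ≤
        (({w : V | G.Reachable u w ∧ G.dist u w ≤ s - 1} ∩ S).ncard : ℝ) := by
  classical
  have hV : Nonempty V := ⟨hS.choose⟩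
  -- convert the girth hypothesis to `egirth`
  have hg : G.egirth = ((2 * s + 1 : ℕ) : ℕ∞) := by
    have h2 : G.egirth.toNat = 2 * s + 1 := hgirth
    have hne : G.egirth ≠ ⊤ := by
      intro h
      rw [h] at h2
      simp at h2
    rw [← ENat.coe_toNat hne, h2]
  set M := mooreOdd k (s - 1) with hM
  set S' := S.toFinset with hS'
  have hS'card : S.ncard = S'.card := Set.ncard_eq_toFinset_card' S
  set g : V → ℕ := fun u =>
    (Finset.univ.filter (fun w => (G.Reachable u w ∧ G.dist u w ≤ s - 1) ∧ w ∈ S)).card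
    with hgdef
  have hgn : ∀ u : V, ({w : V | G.Reachable u w ∧ G.dist u w ≤ s - 1} ∩ S).ncard = g u := by
    intro u
    rw [Set.ncard_eq_toFinset_card']
    congr 1
    ext w
    simp [Set.mem_toFinset]
  -- each vertex's ball has at least M vertices
  have hball : ∀ w : V,
      M ≤ (Finset.univ.filter (fun u => G.Reachable u w ∧ G.dist u w ≤ s - 1)).card := by
    intro w
    have := ball_card_lower hk hs hreg hg w
    rw [Set.ncard_eq_toFinset_card', Set.toFinset_setOf] at this
    refine le_trans this (le_of_eq ?_)
    congr 1
    ext u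
    simp only [Finset.mem_filter, Finset.mem_univ, true_and]
    constructor
    · rintro ⟨h1, h2⟩
      exact ⟨h1.symm, by rwa [SimpleGraph.dist_comm]⟩
    · rintro ⟨h1, h2⟩
      exact ⟨h1.symm, by rwa [SimpleGraph.dist_comm]⟩
  -- double counting
  have hswap : ∑ u : V, g u =
      ∑ w ∈ S', (Finset.univ.filter (fun u => G.Reachable u w ∧ G.dist u w ≤ s - 1)).card := by
    have h1 : ∀ u : V, g u = ∑ w ∈ S',
        (if G.Reachable u w ∧ G.dist u w ≤ s - 1 then 1 else 0) := by
      intro u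
      show (Finset.univ.filter (fun w => (G.Reachable u w ∧ G.dist u w ≤ s - 1) ∧ w ∈ S)).card = _
      rw [show (Finset.univ.filter (fun w => (G.Reachable u w ∧ G.dist u w ≤ s - 1) ∧ w ∈ S)) =
        S'.filter (fun w => G.Reachable u w ∧ G.dist u w ≤ s - 1) by
          ext w; simp only [Finset.mem_filter, Finset.mem_univ, true_and, hS',
            Set.mem_toFinset]; tauto]
      exact Finset.card_filter _ _
    simp only [h1]
    rw [Finset.sum_comm]
    congr 1
    ext w
    exact (Finset.card_filter _ _).symm
  have hsum : M * S'.card ≤ ∑ u : V, g u := by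
    rw [hswap]
    calc M * S'.card = ∑ _w ∈ S', M := by rw [Finset.sum_const, smul_eq_mul, mul_comm]
    _ ≤ _ := Finset.sum_le_sum (fun w _ => hball w)
  -- averaging
  obtain ⟨u, -, hu⟩ := Finset.exists_le_of_sum_le (s := (Finset.univ : Finset V))
      (f := fun _ => M * S'.card) (g := fun u => Fintype.card V * g u)
      Finset.univ_nonempty (by
        rw [Finset.sum_const, ← Finset.mul_sum]
        simp only [Finset.card_univ, smul_eq_mul]
        exact Nat.mul_le_mul_left _ hsum)
  refine ⟨u, ?_⟩
  have hVpos : 0 < (Nat.card V : ℝ) := by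
    rw [Nat.card_eq_fintype_card]
    exact_mod_cast Fintype.card_pos
  rw [div_mul_eq_mul_div, div_le_iff₀ hVpos]
  rw [hgn u, hS'card]
  calc (M : ℝ) * S'.card ≤ (Fintype.card V : ℝ) * g u := by exact_mod_cast hu
  _ = (g u : ℝ) * (Nat.card V : ℝ) := by rw [Nat.card_eq_fintype_card]; ring
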